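/- For 0 < p < ∞ and any simple function g on ℝ², the operator norm of π²_g from the bi-parameter dyadic Hardy space H^p_d(ℝ⊗ℝ) to itself is bounded below by a constant (depending only on p) times ‖g‖_{L^∞(ℝ²)}. (Sharpness of the upper bound ‖π²_g‖ ≲ ‖g‖_∞; it follows by testing on f = h_R and Lebesgue differentiation.) -/

import Mathlib

/-!
Test `π²_g` on a single Haar function `h_R`. Orthonormality gives `π²_g(h_R) = ⟨g⟩_R h_R`, and
the strong maximal function of `h_R` is exactly `|h_R| = |R|^{-1/2} χ_R` (an average of `h_R` over a
dyadic rectangle `R' ∋ z` either vanishes or equals `h_R(z)`, and the latter happens for `R'` of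
half the side lengths of `R`). Hence `‖h_R‖_{H^p}` is positive and finite, and an operator bound
`C` forces `|⟨g⟩_R| ≤ C` for every `R`, so `c = 1` works. A dyadic step function is constant on
every sufficiently fine dyadic rectangle, so each of its values is such an average.
-/

open MeasureTheory Set
open scoped ENNReal Classical

noncomputable section

/-- The dyadic interval `[n·2^k, (n+1)·2^k)`, indexed by `p = (k, n)`. -/
def dyadicI (p : ℤ × ℤ) : Set ℝ := Set.Ico ((p.2 : ℝ) * 2 ^ p.1) ((p.2 + 1 : ℝ) * 2 ^ p.1)

/-- The length `|I| = 2^k` of the dyadic interval indexed by `p = (k, n)`. -/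
def dlen (p : ℤ × ℤ) : ℝ := (2 : ℝ) ^ p.1

/-- The `L²`-normalized Haar function of the dyadic interval indexed by `p = (k, n)`. -/
def haar (p : ℤ × ℤ) (x : ℝ) : ℝ :=
  (2 : ℝ) ^ (-(p.1 : ℝ) / 2) *
    ((dyadicI (p.1 - 1, 2 * p.2)).indicator 1 x - (dyadicI (p.1 - 1, 2 * p.2 + 1)).indicator 1 x)

/-- The normalized indicator `χ_I/|I|`. -/
def nind (p : ℤ × ℤ) (x : ℝ) : ℝ := (dlen p)⁻¹ * (dyadicI p).indicator 1 x

/-- Index of a dyadic rectangle `R = I × J`. -/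
abbrev RectIx : Type := (ℤ × ℤ) × (ℤ × ℤ)

/-- The dyadic rectangle `I × J`. -/
def dyadicR (r : RectIx) : Set (ℝ × ℝ) := (dyadicI r.1) ×ˢ (dyadicI r.2)

/-- The area `|R| = |I|·|J|`. -/
def rlen (r : RectIx) : ℝ := dlen r.1 * dlen r.2

/-- The rectangular Haar function `h_R = h_I ⊗ h_J`. -/
def haarR (r : RectIx) (z : ℝ × ℝ) : ℝ := haar r.1 z.1 * haar r.2 z.2

/-- The rectangular Haar coefficient `f_R = ⟨f, h_R⟩`. -/
def haarCoefR (f : ℝ × ℝ → ℝ) (r : RectIx) : ℝ := ∫ z : ℝ × ℝ, f z * haarR r z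

/-- The average of `g` over the dyadic rectangle `R`. -/
def avgR (g : ℝ × ℝ → ℝ) (r : RectIx) : ℝ := (rlen r)⁻¹ * ∫ z in dyadicR r, g z

/-- The average of `u` over the dyadic interval `I`. -/
def avgI (u : ℝ → ℝ) (p : ℤ × ℤ) : ℝ := (dlen p)⁻¹ * ∫ x in dyadicI p, u x

/-- The Haar coefficient in the second variable, `f_J(x) = ⟨f(x,·), h_J⟩`. -/
def coefSnd (f : ℝ × ℝ → ℝ) (q : ℤ × ℤ) (x : ℝ) : ℝ := ∫ y : ℝ, f (x, y) * haar q y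

/-- The Haar coefficient in the first variable, `f_I(y) = ⟨f(·,y), h_I⟩`. -/
def coefFst (f : ℝ × ℝ → ℝ) (p : ℤ × ℤ) (y : ℝ) : ℝ := ∫ x : ℝ, f (x, y) * haar p x

/-- The bi-parameter dyadic square function. -/
def sqR (f : ℝ × ℝ → ℝ) (z : ℝ × ℝ) : ℝ :=
  Real.sqrt (∑' r : RectIx, (haarCoefR f r) ^ 2 * (rlen r)⁻¹ * (dyadicR r).indicator 1 z)

/-- The strong dyadic maximal function. -/
def strongMax (g : ℝ × ℝ → ℝ) (z : ℝ × ℝ) : ℝ :=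
  ⨆ r : {r : RectIx // z ∈ dyadicR r}, |avgR g r.1|

/-- The one-parameter dyadic maximal function. -/
def dyadMax (u : ℝ → ℝ) (x : ℝ) : ℝ := ⨆ p : {p : ℤ × ℤ // x ∈ dyadicI p}, |avgI u p.1|

/-- `f` is a finite linear combination of indicators of dyadic intervals. -/
def IsDyadicSimple (f : ℝ → ℝ) : Prop :=
  ∃ (s : Finset (ℤ × ℤ)) (c : ℤ × ℤ → ℝ),
    f = fun x => ∑ p ∈ s, c p * (dyadicI p).indicator 1 x

/-- `g` is a finite linear combination of indicators of dyadic rectangles. -/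
def IsDyadicSimple2 (g : ℝ × ℝ → ℝ) : Prop :=
  ∃ (s : Finset RectIx) (c : RectIx → ℝ),
    g = fun z => ∑ r ∈ s, c r * (dyadicR r).indicator 1 z

/-- `f` is a finite linear combination of rectangular Haar functions. -/
def FinHaar2 (f : ℝ × ℝ → ℝ) : Prop :=
  ∃ (s : Finset RectIx) (c : RectIx → ℝ), f = fun z => ∑ r ∈ s, c r * haarR r z

/-- The paraproduct `π²_g(f) = Σ_R f_R ⟨g⟩_R h_R`. -/
def pi2 (g f : ℝ × ℝ → ℝ) (z : ℝ × ℝ) : ℝ :=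
  ∑' r : RectIx, haarCoefR f r * avgR g r * haarR r z

/-- The mixed paraproduct `π³_g(f) = Σ_{I,J} ⟨f_J⟩_I ⟨g_I⟩_J h_I ⊗ h_J`. -/
def pi3 (g f : ℝ × ℝ → ℝ) (z : ℝ × ℝ) : ℝ :=
  ∑' r : RectIx, avgI (coefSnd f r.2) r.1 * avgI (coefFst g r.1) r.2 * haarR r z

/-- The mixed paraproduct `π⁴_g(f) = Σ_{I,J} ⟨f_J⟩_I g_{I×J} h_I ⊗ χ̄_J`. -/
def pi4 (g f : ℝ × ℝ → ℝ) (z : ℝ × ℝ) : ℝ :=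
  ∑' r : RectIx, avgI (coefSnd f r.2) r.1 * haarCoefR g r * haar r.1 z.1 * nind r.2 z.2

/-- The mixed square-maximal operator `S₂M₁`. -/
def S2M1 (f : ℝ × ℝ → ℝ) (z : ℝ × ℝ) : ℝ :=
  Real.sqrt (∑' q : ℤ × ℤ,
    (dyadMax (coefSnd f q) z.1) ^ 2 * (dlen q)⁻¹ * (dyadicI q).indicator 1 z.2)

/-- The mixed maximal-square operator `M₂S₁`. -/
def M2S1 (g : ℝ × ℝ → ℝ) (z : ℝ × ℝ) : ℝ :=
  ⨆ q : {q : ℤ × ℤ // z.2 ∈ dyadicI q},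
    Real.sqrt (∑' p : ℤ × ℤ,
      (avgI (coefFst g p) q.1) ^ 2 * (dlen p)⁻¹ * (dyadicI p).indicator 1 z.1)

/-- The mixed maximal-square operator `M₁S₂`. -/
def M1S2 (f : ℝ × ℝ → ℝ) (z : ℝ × ℝ) : ℝ :=
  ⨆ p : {p : ℤ × ℤ // z.1 ∈ dyadicI p},
    Real.sqrt (∑' q : ℤ × ℤ,
      (avgI (coefSnd f q) p.1) ^ 2 * (dlen q)⁻¹ * (dyadicI q).indicator 1 z.2)

/-- The `H^p_d(ℝ⊗ℝ)` quasi-norm `‖M(f)‖_{L^p}`. -/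
def hpNorm (p : ℝ) (f : ℝ × ℝ → ℝ) : ℝ≥0∞ :=
  eLpNorm (strongMax f) (ENNReal.ofReal p) volume


lemma mem_dyadicI_iff_floor {x : ℝ} {p : ℤ × ℤ} : x ∈ dyadicI p ↔ ⌊x / 2 ^ p.1⌋ = p.2 := by
  rw [Int.floor_eq_iff, le_div_iff₀ (by positivity), div_lt_iff₀ (by positivity)]
  rfl

lemma floor_div_two_zpow_of_le (x : ℝ) {k l : ℤ} (h : k ≤ l) :
    ⌊x / 2 ^ l⌋ = ⌊x / 2 ^ k⌋ / 2 ^ (l - k).toNat := by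
  have hl : (2 : ℝ) ^ l = 2 ^ k * ((2 ^ (l - k).toNat : ℕ) : ℝ) := by
    rw [Nat.cast_pow, Nat.cast_ofNat, ← zpow_natCast, ← zpow_add₀ two_ne_zero]
    congr 1
    omega
  rw [hl, ← div_div, Int.floor_div_natCast]
  push_cast
  rfl

lemma floor_eq_of_mem_dyadicI {x y : ℝ} {q : ℤ × ℤ} {k : ℤ} (hk : q.1 ≤ k)
    (hx : x ∈ dyadicI q) (hy : y ∈ dyadicI q) : ⌊x / 2 ^ k⌋ = ⌊y / 2 ^ k⌋ := by
  rw [mem_dyadicI_iff_floor] at hx hy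
  rw [floor_div_two_zpow_of_le x hk, floor_div_two_zpow_of_le y hk, hx, hy]

lemma mem_dyadicI_iff_of_mem_finer {x y : ℝ} {p q : ℤ × ℤ} (h : q.1 ≤ p.1)
    (hx : x ∈ dyadicI q) (hy : y ∈ dyadicI q) : x ∈ dyadicI p ↔ y ∈ dyadicI p := by
  rw [mem_dyadicI_iff_floor, mem_dyadicI_iff_floor, floor_eq_of_mem_dyadicI h hx hy]

lemma dyadicI_subset_or_disjoint {p q : ℤ × ℤ} (h : q.1 ≤ p.1) :
    dyadicI q ⊆ dyadicI p ∨ Disjoint (dyadicI q) (dyadicI p) := by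
  refine or_iff_not_imp_right.2 fun hnd => ?_
  obtain ⟨x, hxq, hxp⟩ := Set.not_disjoint_iff.1 hnd
  exact fun y hy => (mem_dyadicI_iff_of_mem_finer h hxq hy).1 hxp

lemma disjoint_dyadicI_of_fst_eq {p q : ℤ × ℤ} (h : p.1 = q.1) (hne : p.2 ≠ q.2) :
    Disjoint (dyadicI p) (dyadicI q) := by
  refine Set.disjoint_left.2 fun x hp hq => hne ?_
  rw [mem_dyadicI_iff_floor] at hp hq
  rw [← hp, ← hq, h]

lemma dyadicI_eq_union_children (p : ℤ × ℤ) :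
    dyadicI p = dyadicI (p.1 - 1, 2 * p.2) ∪ dyadicI (p.1 - 1, 2 * p.2 + 1) := by
  ext x
  simp only [Set.mem_union, mem_dyadicI_iff_floor,
    floor_div_two_zpow_of_le x (show p.1 - 1 ≤ p.1 by omega),
    show (p.1 - (p.1 - 1)).toNat = 1 by omega]
  omega

lemma measurableSet_dyadicI (p : ℤ × ℤ) : MeasurableSet (dyadicI p) := measurableSet_Ico

lemma volume_dyadicI (p : ℤ × ℤ) : volume (dyadicI p) = ENNReal.ofReal (dlen p) := by
  rw [dyadicI, Real.volume_Ico, dlen]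
  ring_nf

lemma dlen_pos (p : ℤ × ℤ) : 0 < dlen p := by unfold dlen; positivity

lemma measureReal_dyadicI (p : ℤ × ℤ) : volume.real (dyadicI p) = dlen p := by
  rw [measureReal_def, volume_dyadicI, ENNReal.toReal_ofReal (dlen_pos p).le]

lemma avgI_eq_of_eqOn {f : ℝ → ℝ} {q : ℤ × ℤ} {c : ℝ} (h : ∀ x ∈ dyadicI q, f x = c) :
    avgI f q = c := by
  rw [avgI, setIntegral_congr_fun (measurableSet_dyadicI q) h, setIntegral_const,
    measureReal_dyadicI, smul_eq_mul, inv_mul_cancel_left₀ (dlen_pos q).ne']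

lemma integrable_indicator_dyadicI (p : ℤ × ℤ) (c : ℝ) :
    Integrable ((dyadicI p).indicator fun _ => c) := by
  rw [integrable_indicator_iff (measurableSet_dyadicI p)]
  exact integrableOn_const (by rw [volume_dyadicI]; exact ENNReal.ofReal_ne_top)

lemma integral_indicator_dyadicI (p : ℤ × ℤ) (c : ℝ) :
    ∫ x, (dyadicI p).indicator (fun _ => c) x = dlen p * c := by
  rw [integral_indicator_const c (measurableSet_dyadicI p), measureReal_dyadicI, smul_eq_mul]

lemma haar_eq_zero_of_notMem {x : ℝ} {p : ℤ × ℤ} (h : x ∉ dyadicI p) : haar p x = 0 := by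
  rw [dyadicI_eq_union_children, Set.mem_union, not_or] at h
  simp [haar, Set.indicator_of_notMem, h.1, h.2]

lemma integral_haar (p : ℤ × ℤ) : ∫ x, haar p x = 0 := by
  unfold haar
  simp only [Pi.one_def]
  rw [integral_const_mul, integral_sub (integrable_indicator_dyadicI _ _)
    (integrable_indicator_dyadicI _ _), integral_indicator_dyadicI, integral_indicator_dyadicI]
  simp [dlen]

lemma two_rpow_neg_half_eq (p : ℤ × ℤ) : (2 : ℝ) ^ (-(p.1 : ℝ) / 2) = dlen p ^ (-(1 : ℝ) / 2) := by
  rw [dlen, ← Real.rpow_intCast, ← Real.rpow_mul zero_le_two]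
  ring_nf

lemma abs_haar (p : ℤ × ℤ) (x : ℝ) :
    |haar p x| = (dyadicI p).indicator (fun _ => dlen p ^ (-(1 : ℝ) / 2)) x := by
  have hd := disjoint_dyadicI_of_fst_eq (p := (p.1 - 1, 2 * p.2)) (q := (p.1 - 1, 2 * p.2 + 1))
    rfl (by omega)
  rw [haar, abs_mul, abs_of_pos (by positivity), two_rpow_neg_half_eq, dyadicI_eq_union_children p]
  by_cases hl : x ∈ dyadicI (p.1 - 1, 2 * p.2)
  · simp [hl, Set.disjoint_left.1 hd hl, dlen]
  by_cases hr : x ∈ dyadicI (p.1 - 1, 2 * p.2 + 1)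
  · simp [hl, hr, dlen]
  · simp [hl, hr]

lemma haar_mul_self (p : ℤ × ℤ) (x : ℝ) :
    haar p x * haar p x = (dyadicI p).indicator (fun _ => (dlen p)⁻¹) x := by
  rw [← abs_mul_abs_self, abs_haar]
  by_cases hx : x ∈ dyadicI p
  · simp only [Set.indicator_of_mem hx]
    rw [← Real.rpow_add (dlen_pos p)]
    norm_num [Real.rpow_neg_one]
  · simp [hx]

lemma integral_haar_mul_self (p : ℤ × ℤ) : ∫ x, haar p x * haar p x = 1 := by
  simp_rw [haar_mul_self]
  rw [integral_indicator_dyadicI, mul_inv_cancel₀ (dlen_pos p).ne']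

lemma haar_eq_of_mem_finer {x y : ℝ} {p q : ℤ × ℤ} (h : q.1 < p.1)
    (hx : x ∈ dyadicI q) (hy : y ∈ dyadicI q) : haar p x = haar p y := by
  have h' : q.1 ≤ p.1 - 1 := by omega
  simp only [haar, Set.indicator_apply, Pi.one_apply,
    mem_dyadicI_iff_of_mem_finer (p := (p.1 - 1, 2 * p.2)) h' hx hy,
    mem_dyadicI_iff_of_mem_finer (p := (p.1 - 1, 2 * p.2 + 1)) h' hx hy]

lemma integral_mul_haar_of_eqOn {f : ℝ → ℝ} {q : ℤ × ℤ} {c : ℝ}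
    (h : ∀ x ∈ dyadicI q, f x = c) : ∫ x, f x * haar q x = 0 := by
  have hf : ∀ x, f x * haar q x = c * haar q x := fun x => by
    by_cases hx : x ∈ dyadicI q
    · rw [h x hx]
    · rw [haar_eq_zero_of_notMem hx, mul_zero, mul_zero]
  simp_rw [hf]
  rw [integral_const_mul, integral_haar, mul_zero]

lemma integral_haar_mul_haar (p q : ℤ × ℤ) :
    ∫ x, haar p x * haar q x = if p = q then 1 else 0 := by
  split_ifs with hpq
  · subst hpq
    exact integral_haar_mul_self p
  wlog hle : q.1 ≤ p.1 generalizing p q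
  · simp_rw [mul_comm (haar p _)]
    exact this q p (Ne.symm hpq) (by omega)
  obtain ⟨c, hc⟩ : ∃ c, ∀ x ∈ dyadicI q, haar p x = c := by
    rcases hle.lt_or_eq with hlt | heq
    · have hq : (q.2 : ℝ) * 2 ^ q.1 ∈ dyadicI q :=
        Set.left_mem_Ico.2 (mul_lt_mul_of_pos_right (lt_add_one _) (by positivity))
      exact ⟨_, fun x hx => haar_eq_of_mem_finer hlt hx hq⟩
    · have hne : p.2 ≠ q.2 := fun h2 => hpq (Prod.ext heq.symm h2)
      exact ⟨0, fun x hx => haar_eq_zero_of_notMem fun hxp =>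
        Set.disjoint_left.1 (disjoint_dyadicI_of_fst_eq heq.symm hne) hxp hx⟩
  exact integral_mul_haar_of_eqOn hc

lemma avgI_haar_of_lt {x : ℝ} {p q : ℤ × ℤ} (h : q.1 < p.1) (hx : x ∈ dyadicI q) :
    avgI (haar p) q = haar p x :=
  avgI_eq_of_eqOn fun _ hy => haar_eq_of_mem_finer h hy hx

lemma avgI_haar_of_le {p q : ℤ × ℤ} (h : p.1 ≤ q.1) : avgI (haar p) q = 0 := by
  rcases dyadicI_subset_or_disjoint h with hsub | hdis
  · rw [avgI, setIntegral_eq_integral_of_forall_compl_eq_zero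
      fun x hx => haar_eq_zero_of_notMem fun hxp => hx (hsub hxp), integral_haar, mul_zero]
  · exact avgI_eq_of_eqOn fun x hx => haar_eq_zero_of_notMem (Set.disjoint_right.1 hdis hx)

lemma abs_avgI_haar_le {x : ℝ} {q : ℤ × ℤ} (hx : x ∈ dyadicI q) (p : ℤ × ℤ) :
    |avgI (haar p) q| ≤ |haar p x| := by
  rcases lt_or_ge q.1 p.1 with h | h
  · rw [avgI_haar_of_lt h hx]
  · rw [avgI_haar_of_le h, abs_zero]
    exact abs_nonneg _

lemma exists_avgI_haar_eq (p : ℤ × ℤ) (x : ℝ) :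
    ∃ q, x ∈ dyadicI q ∧ avgI (haar p) q = haar p x := by
  have hx : x ∈ dyadicI (p.1 - 1, ⌊x / 2 ^ (p.1 - 1)⌋) := mem_dyadicI_iff_floor.2 rfl
  exact ⟨_, hx, avgI_haar_of_lt (by simp) hx⟩

lemma measurableSet_dyadicR (r : RectIx) : MeasurableSet (dyadicR r) :=
  (measurableSet_dyadicI r.1).prod (measurableSet_dyadicI r.2)

lemma volume_dyadicR (r : RectIx) : volume (dyadicR r) = ENNReal.ofReal (rlen r) := by
  rw [dyadicR, Measure.volume_eq_prod, Measure.prod_prod, volume_dyadicI, volume_dyadicI, rlen,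
    ENNReal.ofReal_mul (dlen_pos _).le]

lemma rlen_pos (r : RectIx) : 0 < rlen r := mul_pos (dlen_pos _) (dlen_pos _)

lemma avgR_eq_of_eqOn {g : ℝ × ℝ → ℝ} {r : RectIx} {c : ℝ} (h : ∀ z ∈ dyadicR r, g z = c) :
    avgR g r = c := by
  rw [avgR, setIntegral_congr_fun (measurableSet_dyadicR r) h, setIntegral_const, smul_eq_mul,
    measureReal_def, volume_dyadicR, ENNReal.toReal_ofReal (rlen_pos r).le,
    inv_mul_cancel_left₀ (rlen_pos r).ne']

lemma avgR_const_mul (a : ℝ) (g : ℝ × ℝ → ℝ) (r : RectIx) :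
    avgR (fun z => a * g z) r = a * avgR g r := by
  rw [avgR, avgR, integral_const_mul, mul_left_comm]

lemma avgR_haarR (r r' : RectIx) :
    avgR (haarR r) r' = avgI (haar r.1) r'.1 * avgI (haar r.2) r'.2 := by
  rw [avgR, avgI, avgI, rlen, dyadicR, Measure.volume_eq_prod]
  simp only [haarR]
  rw [setIntegral_prod_mul, mul_inv]
  ring

lemma haarCoefR_haarR (r r' : RectIx) : haarCoefR (haarR r) r' = if r = r' then 1 else 0 := by
  have hsplit : ∀ z : ℝ × ℝ, haarR r z * haarR r' z =
      (haar r.1 z.1 * haar r'.1 z.1) * (haar r.2 z.2 * haar r'.2 z.2) := fun z => by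
    simp only [haarR]; ring
  simp_rw [haarCoefR, hsplit]
  rw [Measure.volume_eq_prod, integral_prod_mul (fun x => haar r.1 x * haar r'.1 x)
    (fun y => haar r.2 y * haar r'.2 y), integral_haar_mul_haar, integral_haar_mul_haar]
  by_cases h1 : r.1 = r'.1 <;> by_cases h2 : r.2 = r'.2 <;> simp [h1, h2, Prod.ext_iff]

lemma pi2_haarR (g : ℝ × ℝ → ℝ) (r : RectIx) :
    pi2 g (haarR r) = fun z => avgR g r * haarR r z := by
  funext z
  rw [pi2, tsum_eq_single r fun r' hr' => by rw [haarCoefR_haarR, if_neg (Ne.symm hr'), zero_mul,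
    zero_mul], haarCoefR_haarR, if_pos rfl, one_mul]

lemma finHaar2_haarR (r : RectIx) : FinHaar2 (haarR r) :=
  ⟨{r}, fun _ => 1, by simp⟩

lemma abs_haarR (r : RectIx) (z : ℝ × ℝ) :
    |haarR r z| = (dyadicR r).indicator (fun _ => rlen r ^ (-(1 : ℝ) / 2)) z := by
  rw [haarR, abs_mul, abs_haar, abs_haar, rlen, Real.mul_rpow (dlen_pos _).le (dlen_pos _).le]
  by_cases h1 : z.1 ∈ dyadicI r.1 <;> by_cases h2 : z.2 ∈ dyadicI r.2 <;>
    simp [dyadicR, h1, h2]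

lemma strongMax_haarR (r : RectIx) (z : ℝ × ℝ) : strongMax (haarR r) z = |haarR r z| := by
  have hle : ∀ r' : {r' : RectIx // z ∈ dyadicR r'}, |avgR (haarR r) r'.1| ≤ |haarR r z| :=
    fun ⟨_, hz⟩ => by
      rw [avgR_haarR, haarR, abs_mul, abs_mul]
      exact mul_le_mul (abs_avgI_haar_le hz.1 _) (abs_avgI_haar_le hz.2 _) (abs_nonneg _)
        (abs_nonneg _)
  obtain ⟨q₁, hz₁, h₁⟩ := exists_avgI_haar_eq r.1 z.1
  obtain ⟨q₂, hz₂, h₂⟩ := exists_avgI_haar_eq r.2 z.2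
  have hz : z ∈ dyadicR (q₁, q₂) := ⟨hz₁, hz₂⟩
  have : Nonempty {r' : RectIx // z ∈ dyadicR r'} := ⟨⟨_, hz⟩⟩
  refine le_antisymm (ciSup_le hle) (le_ciSup_of_le ⟨_, Set.forall_mem_range.2 hle⟩ ⟨_, hz⟩ ?_)
  rw [avgR_haarR, h₁, h₂, haarR]

lemma strongMax_const_mul (a : ℝ) (g : ℝ × ℝ → ℝ) (z : ℝ × ℝ) :
    strongMax (fun w => a * g w) z = |a| * strongMax g z := by
  simp only [strongMax, avgR_const_mul, abs_mul, Real.mul_iSup_of_nonneg (abs_nonneg a)]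

lemma hpNorm_const_mul (p a : ℝ) (g : ℝ × ℝ → ℝ) :
    hpNorm p (fun z => a * g z) = ‖a‖ₑ * hpNorm p g := by
  have hmax : strongMax (fun z => a * g z) = |a| • strongMax g :=
    funext (strongMax_const_mul a g)
  rw [hpNorm, hmax, eLpNorm_const_smul, Real.enorm_abs, hpNorm]

lemma hpNorm_haarR (p : ℝ) (r : RectIx) :
    hpNorm p (haarR r) = eLpNorm ((dyadicR r).indicator fun _ => rlen r ^ (-(1 : ℝ) / 2))
      (ENNReal.ofReal p) volume := by
  rw [hpNorm, ← eLpNorm_norm]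
  congr 1
  funext z
  rw [strongMax_haarR, Real.norm_eq_abs, abs_abs, abs_haarR]

lemma hpNorm_haarR_ne_zero {p : ℝ} (hp : 0 < p) (r : RectIx) : hpNorm p (haarR r) ≠ 0 := by
  rw [hpNorm_haarR, eLpNorm_indicator_const' (measurableSet_dyadicR r)
    (by simp [volume_dyadicR, rlen_pos]) (by simpa using hp)]
  have : 0 < rlen r ^ (-(1 : ℝ) / 2) := Real.rpow_pos_of_pos (rlen_pos r) _
  simp [volume_dyadicR, rlen_pos, this.ne']

lemma hpNorm_haarR_ne_top (p : ℝ) (r : RectIx) : hpNorm p (haarR r) ≠ ⊤ := by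
  rw [hpNorm_haarR]
  refine ne_top_of_le_ne_top ?_ (eLpNorm_indicator_const_le _ _)
  exact ENNReal.mul_ne_top enorm_ne_top
    (ENNReal.rpow_ne_top_of_nonneg (by positivity) (by simp [volume_dyadicR]))

lemma enorm_avgR_le_of_hpNorm_pi2_le {p : ℝ} (hp : 0 < p) {g : ℝ × ℝ → ℝ} {C : ℝ≥0∞}
    (r : RectIx) (hC : hpNorm p (pi2 g (haarR r)) ≤ C * hpNorm p (haarR r)) :
    ‖avgR g r‖ₑ ≤ C := by
  rw [pi2_haarR, hpNorm_const_mul] at hC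
  exact (ENNReal.mul_le_mul_iff_left (hpNorm_haarR_ne_zero hp r) (hpNorm_haarR_ne_top p r)).1 hC

lemma IsDyadicSimple2.exists_avgR_eq {g : ℝ × ℝ → ℝ} (hg : IsDyadicSimple2 g) (z : ℝ × ℝ) :
    ∃ r : RectIx, avgR g r = g z := by
  obtain ⟨s, c, rfl⟩ := hg
  obtain ⟨K, hK⟩ := (s.image fun r => min r.1.1 r.2.1).bddBelow
  set r₀ : RectIx := ((K, ⌊z.1 / 2 ^ K⌋), (K, ⌊z.2 / 2 ^ K⌋))
  have hz : z ∈ dyadicR r₀ := ⟨mem_dyadicI_iff_floor.2 rfl, mem_dyadicI_iff_floor.2 rfl⟩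
  refine ⟨r₀, avgR_eq_of_eqOn fun w hw => Finset.sum_congr rfl fun r hr => ?_⟩
  obtain ⟨hK₁, hK₂⟩ := le_min_iff.1 (hK (Finset.mem_image_of_mem _ hr))
  have hmem : w ∈ dyadicR r ↔ z ∈ dyadicR r :=
    and_congr (mem_dyadicI_iff_of_mem_finer hK₁ hw.1 hz.1)
      (mem_dyadicI_iff_of_mem_finer hK₂ hw.2 hz.2)
  simp only [Set.indicator_apply, Pi.one_apply, hmem]

/-- For `0 < p < ∞`, the `H^p_d(ℝ⊗ℝ) → H^p_d(ℝ⊗ℝ)` operator norm of `π²_g`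
is bounded below by `c(p) · ‖g‖_{L^∞}`. -/
theorem pi2_opNorm_lower_bound (p : ℝ) (hp : 0 < p) :
    ∃ c : ℝ, 0 < c ∧ ∀ g : ℝ × ℝ → ℝ, IsDyadicSimple2 g → ∀ C : ℝ≥0∞,
      (∀ f : ℝ × ℝ → ℝ, FinHaar2 f → hpNorm p (pi2 g f) ≤ C * hpNorm p f) →
      ENNReal.ofReal c * eLpNorm g ⊤ volume ≤ C := by
  refine ⟨1, one_pos, fun g hg C hC => ?_⟩
  have havg : ∀ r, ‖avgR g r‖ₑ ≤ C := fun r =>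
    enorm_avgR_le_of_hpNorm_pi2_le hp r (hC _ (finHaar2_haarR r))
  have hpt : ∀ z, ‖g z‖ₑ ≤ C := fun z => by
    obtain ⟨r, hr⟩ := hg.exists_avgR_eq z
    exact hr ▸ havg r
  rw [ENNReal.ofReal_one, one_mul, eLpNorm_exponent_top]
  exact eLpNormEssSup_le_of_ae_enorm_bound (Filter.Eventually.of_forall hpt)

end
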